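/- Let a > 0 and assume g(r;a) > 0 for all r ∈ (0,∞). Then w(·;a) is bounded on (0,∞) if and only if w'(r;a)/w(r;a) → 0 as r → ∞. Moreover, if w(·;a) is bounded, then w(r;a) converges to a limit l(a) ∈ (0,∞) as r → ∞ and ρ(r)^{(2-p)/(p-1)} · w'(r;a) → (p-1) · l(a)^{1/(p-1)} as r → ∞. -/

import Mathlib

open Real Set Filter MeasureTheory

/-- `f` is a solution of the profile equation with parameter `a`:
`f` is C¹ on `[0,∞)` with derivative `f'`, the map `r ↦ |f'(r)|^{p-2} f'(r)` is C¹ on `[0,∞)`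
with derivative `F'`, the ODE
`(|f'|^{p-2}f')'(r) + ((N-1)/r)(|f'|^{p-2}f')(r) + f(r) - |f'(r)|^{p-1} = 0` holds for `r > 0`,
and `f 0 = a`, `f' 0 = 0`. -/
def IsProfileSol (N : ℕ) (p a : ℝ) (f f' F' : ℝ → ℝ) : Prop :=
  (∀ r ∈ Ici (0:ℝ), HasDerivWithinAt f (f' r) (Ici 0) r) ∧
  ContinuousOn f' (Ici 0) ∧
  (∀ r ∈ Ici (0:ℝ), HasDerivWithinAt (fun s => |f' s| ^ (p - 2) * f' s) (F' r) (Ici 0) r) ∧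
  ContinuousOn F' (Ici 0) ∧
  (∀ r, 0 < r →
    F' r + (((N : ℝ) - 1) / r) * (|f' r| ^ (p - 2) * f' r) + f r - |f' r| ^ (p - 1) = 0) ∧
  f 0 = a ∧ f' 0 = 0

/-- `g(r;a) = -|f'(r;a)|^{p-2} f'(r;a)`. -/
noncomputable def gFun (p : ℝ) (f' : ℝ → ℝ) (r : ℝ) : ℝ := -(|f' r| ^ (p - 2) * f' r)

/-- `ρ(r) = r^{N-1} e^r`. -/
noncomputable def rho (N : ℕ) (r : ℝ) : ℝ := r ^ (N - 1) * Real.exp r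

/-- the derivative of `ρ`. -/
noncomputable def rho' (N : ℕ) (r : ℝ) : ℝ :=
  (((N : ℝ) - 1) * r ^ (N - 2) + r ^ (N - 1)) * Real.exp r

/-- `w(r;a) = ρ(r) g(r;a)`. -/
noncomputable def wFun (N : ℕ) (p : ℝ) (f' : ℝ → ℝ) (r : ℝ) : ℝ := rho N r * gFun p f' r

/-- the derivative `w'(r;a) = ρ'(r) g(r;a) + ρ(r) g'(r;a)`, where `g' = -F'`. -/
noncomputable def wDeriv (N : ℕ) (p : ℝ) (f' F' : ℝ → ℝ) (r : ℝ) : ℝ :=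
  rho' N r * gFun p f' r - rho N r * F' r

/-!
Since `g > 0` we have `f' < 0` and `g = (-f')^{p-1}`, and the equation becomes `w' = ρ f`.
Positivity of `w` forces `f > 0`, so `w` increases.

If `w` is bounded it converges to some `l > 0`, and `f → 0` (else `w` grows linearly).
L'Hôpital's rule for `f / ρ^{-1/(p-1)}` gives `ρ^{1/(p-1)} f → (p-1) l^{1/(p-1)}`; this is the
second claim because `ρ^{(2-p)/(p-1)} w' = ρ^{1/(p-1)} f`, and since `1/(p-1) > 1` it also gives
`w'/w = ρ^{1-1/(p-1)} (ρ^{1/(p-1)} f) / w → 0`.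

Conversely `w'/w = u := f/g`. With `v := g^{(2-p)/(p-1)}` and `c := 1 + (N-1)/r`,
`u' = c u - u² - v` and `v' = ((2-p)/(p-1)) v (u - c)`. Once `u < 1/4`, `v` decays
exponentially and `u ≤ 4 v`, so `(log w)' = u` is integrable and `w` is bounded.
-/

open Topology

section Comparison

theorem image_le_of_hasDerivAt_le_Ici {f f' B B' : ℝ → ℝ} {a x : ℝ}
    (hf : ∀ y ≥ a, HasDerivAt f (f' y) y) (hB : ∀ y ≥ a, HasDerivAt B (B' y) y)
    (ha : f a ≤ B a) (bound : ∀ y ≥ a, f' y ≤ B' y) (hx : a ≤ x) : f x ≤ B x :=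
  image_le_of_deriv_right_le_deriv_boundary
    (fun y hy => (hf y hy.1).continuousAt.continuousWithinAt)
    (fun y hy => (hf y hy.1).hasDerivWithinAt) ha
    (fun y hy => (hB y hy.1).continuousAt.continuousWithinAt)
    (fun y hy => (hB y hy.1).hasDerivWithinAt) (fun y hy => bound y hy.1) ⟨hx, le_rfl⟩

theorem tendsto_atTop_of_le_hasDerivAt {h h' : ℝ → ℝ} {a m : ℝ} (hm : 0 < m)
    (hd : ∀ x ≥ a, HasDerivAt h (h' x) x) (hh' : ∀ x ≥ a, m ≤ h' x) :
    Tendsto h atTop atTop := by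
  have hline : ∀ x, HasDerivAt (fun x => h a + m * (x - a)) m x := fun x => by
    simpa using (((hasDerivAt_id x).sub_const a).const_mul m).const_add (h a)
  refine tendsto_atTop_mono' _ (eventually_atTop.2 ⟨a, fun x hx =>
    image_le_of_hasDerivAt_le_Ici (fun y _ => hline y) hd (by simp) hh' hx⟩) ?_
  exact tendsto_atTop_add_const_left _ _
    ((tendsto_atTop_add_const_right _ _ tendsto_id).const_mul_atTop hm)

theorem mul_exp_le_of_mul_le_hasDerivAt {φ φ' : ℝ → ℝ} {a k x : ℝ}
    (hd : ∀ y ≥ a, HasDerivAt φ (φ' y) y) (hk : ∀ y ≥ a, k * φ y ≤ φ' y) (hx : a ≤ x) :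
    φ a * exp (k * (x - a)) ≤ φ x := by
  have hdamp : ∀ y ≥ a, HasDerivAt (fun y => φ y * exp (-k * (y - a)))
      ((φ' y - k * φ y) * exp (-k * (y - a))) y := fun y hy => by
    have hlin : HasDerivAt (fun y => -k * (y - a)) (-k) y := by
      simpa using ((hasDerivAt_id y).sub_const a).const_mul (-k)
    exact ((hd y hy).mul hlin.exp).congr_deriv (by ring)
  have hmono : φ a ≤ φ x * exp (-k * (x - a)) :=
    image_le_of_hasDerivAt_le_Ici (f' := fun _ => 0) (B := fun y => φ y * exp (-k * (y - a)))
      (fun y _ => hasDerivAt_const y (φ a))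
      hdamp (by simp) (fun y hy => mul_nonneg (sub_nonneg.2 (hk y hy)) (exp_pos _).le) hx
  calc φ a * exp (k * (x - a)) ≤ φ x * exp (-k * (x - a)) * exp (k * (x - a)) := by
        gcongr
    _ = φ x := by rw [mul_assoc, ← exp_add]; simp

theorem le_mul_exp_of_hasDerivAt_le_mul {φ φ' : ℝ → ℝ} {a k x : ℝ}
    (hd : ∀ y ≥ a, HasDerivAt φ (φ' y) y) (hk : ∀ y ≥ a, φ' y ≤ k * φ y) (hx : a ≤ x) :
    φ x ≤ φ a * exp (k * (x - a)) := by
  have := mul_exp_le_of_mul_le_hasDerivAt (φ := fun y => -φ y) (k := k) (fun y hy => (hd y hy).neg)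
    (fun y hy => by linarith [hk y hy]) hx
  linarith

end Comparison

section Rho

variable {N : ℕ} {r : ℝ}

theorem rho_pos (hr : 0 < r) : 0 < rho N r :=
  mul_pos (pow_pos hr _) (exp_pos r)

theorem one_le_rho (hr : 1 ≤ r) : 1 ≤ rho N r :=
  one_le_mul_of_one_le_of_one_le (one_le_pow₀ hr) (one_le_exp (by linarith))

theorem tendsto_rho_atTop : Tendsto (rho N) atTop atTop :=
  tendsto_atTop_mono' _ (eventually_atTop.2 ⟨1, fun r hr =>
    le_mul_of_one_le_left (exp_pos r).le (one_le_pow₀ hr)⟩) tendsto_exp_atTop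

theorem hasDerivAt_rho (hN : 1 ≤ N) (r : ℝ) : HasDerivAt (rho N) (rho' N r) r := by
  refine ((hasDerivAt_pow (N - 1) r).mul (hasDerivAt_exp r)).congr_deriv ?_
  rw [rho', Nat.cast_sub hN, Nat.sub_sub]
  push_cast
  ring

theorem rho'_eq (hN : 1 ≤ N) (hr : 0 < r) : rho' N r = rho N r * (1 + ((N : ℝ) - 1) / r) := by
  obtain ⟨n, rfl⟩ := Nat.exists_eq_add_of_le' hN
  rcases n with _ | n
  · simp [rho', rho]
  · simp only [rho', rho, Nat.add_sub_cancel, show n + 1 + 1 - 2 = n by omega]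
    push_cast
    field_simp
    ring

theorem one_le_one_add_div (hN : 1 ≤ N) (hr : 0 < r) : 1 ≤ 1 + ((N : ℝ) - 1) / r :=
  le_add_of_nonneg_right (div_nonneg (by simpa using hN) hr.le)

theorem rho'_pos (hN : 1 ≤ N) (hr : 0 < r) : 0 < rho' N r := by
  rw [rho'_eq hN hr]
  exact mul_pos (rho_pos hr) (zero_lt_one.trans_le (one_le_one_add_div hN hr))

end Rho

section ProfileSolution

variable {N : ℕ} {p : ℝ} {f' : ℝ → ℝ} {r : ℝ}

theorem neg_of_gFun_pos (hg : 0 < gFun p f' r) : f' r < 0 := by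
  rcases lt_trichotomy (f' r) 0 with h | h | h
  · exact h
  · simp [gFun, h] at hg
  · have : 0 < |f' r| ^ (p - 2) * f' r := mul_pos (rpow_pos_of_pos (abs_pos.2 h.ne') _) h
    rw [gFun] at hg
    linarith

theorem gFun_eq_rpow (hg : 0 < gFun p f' r) : gFun p f' r = (-f' r) ^ (p - 1) := by
  have hf' := neg_of_gFun_pos hg
  rw [gFun, abs_of_neg hf', show p - 1 = (p - 2) + 1 by ring,
    rpow_add (neg_pos.2 hf'), rpow_one]
  ring

theorem neg_eq_gFun_rpow (hp : p ≠ 1) (hg : 0 < gFun p f' r) :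
    -f' r = gFun p f' r ^ (1 / (p - 1)) := by
  rw [gFun_eq_rpow hg, ← rpow_mul (neg_pos.2 (neg_of_gFun_pos hg)).le,
    mul_one_div_cancel (sub_ne_zero.2 hp), rpow_one]

theorem wFun_pos (hr : 0 < r) (hg : 0 < gFun p f' r) : 0 < wFun N p f' r :=
  mul_pos (rho_pos hr) hg

end ProfileSolution

namespace IsProfileSol

variable {N : ℕ} {p a : ℝ} {f f' F' : ℝ → ℝ} {r : ℝ} (hf : IsProfileSol N p a f f' F')
include hf

theorem hasDerivAt (hr : 0 < r) : HasDerivAt f (f' r) r :=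
  (hf.1 r hr.le).hasDerivAt (Ici_mem_nhds hr)

theorem hasDerivAt_gFun (hr : 0 < r) : HasDerivAt (gFun p f') (-F' r) r :=
  ((hf.2.2.1 r hr.le).hasDerivAt (Ici_mem_nhds hr)).neg

theorem F'_eq (hr : 0 < r) (hg : 0 < gFun p f' r) :
    F' r = (1 + ((N : ℝ) - 1) / r) * gFun p f' r - f r := by
  have ode := hf.2.2.2.2.1 r hr
  rw [show |f' r| ^ (p - 2) * f' r = -gFun p f' r by rw [gFun]; ring,
    show |f' r| ^ (p - 1) = gFun p f' r by rw [gFun_eq_rpow hg, abs_of_neg (neg_of_gFun_pos hg)]]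
    at ode
  linear_combination ode

theorem hasDerivAt_wFun (hN : 1 ≤ N) (hr : 0 < r) :
    HasDerivAt (wFun N p f') (wDeriv N p f' F' r) r :=
  ((hasDerivAt_rho hN r).mul (hf.hasDerivAt_gFun hr)).congr_deriv (by rw [wDeriv]; ring)

theorem wDeriv_eq (hN : 1 ≤ N) (hr : 0 < r) (hg : 0 < gFun p f' r) :
    wDeriv N p f' F' r = rho N r * f r := by
  rw [wDeriv, rho'_eq hN hr, hf.F'_eq hr hg]
  ring

variable (hg : ∀ r, 0 < r → 0 < gFun p f' r)
include hg

theorem strictAntiOn : StrictAntiOn f (Ioi 0) := by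
  refine strictAntiOn_of_deriv_neg (convex_Ioi 0)
    (fun x hx => (hf.hasDerivAt hx).continuousAt.continuousWithinAt) fun x hx => ?_
  rw [interior_Ioi] at hx
  rw [(hf.hasDerivAt hx).deriv]
  exact neg_of_gFun_pos (hg x hx)

/-- If `f` ever became nonpositive, `w' = ρ f` would stay below a negative constant and
`w = ρ g > 0` would eventually be negative. -/
theorem pos (hN : 1 ≤ N) (hr : 0 < r) : 0 < f r := by
  by_contra! hfr
  set r₁ := max (r + 1) 1
  have hr₁ : r < r₁ := by simp [r₁]
  have hneg : f r₁ < 0 := (hf.strictAntiOn hg hr (hr.trans hr₁) hr₁).trans_le hfr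
  have hdecr : Tendsto (fun x => -wFun N p f' x) atTop atTop := by
    refine tendsto_atTop_of_le_hasDerivAt (neg_pos.2 hneg) (a := r₁)
      (fun x hx => (hf.hasDerivAt_wFun hN (hr.trans (hr₁.trans_le hx))).neg) fun x hx => ?_
    have hx0 : 0 < x := hr.trans (hr₁.trans_le hx)
    have hfx : f x ≤ f r₁ := (hf.strictAntiOn hg).antitoneOn (hr.trans hr₁) hx0 hx
    have hρ : 1 ≤ rho N x := one_le_rho ((le_max_right _ _).trans hx)
    rw [hf.wDeriv_eq hN hx0 (hg x hx0)]
    nlinarith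
  obtain ⟨x, hx, hx0⟩ := ((hdecr.eventually_gt_atTop 0).and (eventually_gt_atTop 0)).exists
  linarith [wFun_pos hx0 (hg x hx0) (N := N)]

theorem wFun_le (hN : 1 ≤ N) {x y : ℝ} (hx : 0 < x) (hxy : x ≤ y) :
    wFun N p f' x ≤ wFun N p f' y :=
  image_le_of_hasDerivAt_le_Ici (f' := fun _ => 0) (fun z _ => hasDerivAt_const z _)
    (fun z hz => hf.hasDerivAt_wFun hN (hx.trans_le hz)) le_rfl
    (fun z hz => by
      have hz0 := hx.trans_le hz
      rw [hf.wDeriv_eq hN hz0 (hg z hz0)]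
      exact (mul_pos (rho_pos hz0) (hf.pos hg hN hz0)).le) hxy

/-- Otherwise `f` stays above some `b > 0`, so `w' = ρ f ≥ b` on `[1, ∞)`. -/
theorem tendsto_zero_of_wFun_le (hN : 1 ≤ N) {M : ℝ} (hM : ∀ r, 0 < r → wFun N p f' r ≤ M) :
    Tendsto f atTop (𝓝 0) := by
  refine tendsto_order.2 ⟨fun b hb => eventually_atTop.2 ⟨1, fun x hx =>
    hb.trans (hf.pos hg hN (by linarith))⟩, fun b hb => ?_⟩
  obtain ⟨x, hx, hfx⟩ | h := em (∃ x > 0, f x < b)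
  · filter_upwards [eventually_ge_atTop x] with y hy
    exact ((hf.strictAntiOn hg).antitoneOn hx (hx.trans_le hy) hy).trans_lt hfx
  simp only [not_exists, not_and, not_lt] at h
  have hw : Tendsto (wFun N p f') atTop atTop := by
    refine tendsto_atTop_of_le_hasDerivAt hb (a := 1)
      (fun x hx => hf.hasDerivAt_wFun hN (by linarith)) fun x hx => ?_
    rw [hf.wDeriv_eq hN (by linarith) (hg x (by linarith))]
    nlinarith [one_le_rho (N := N) hx, h x (by linarith)]
  obtain ⟨x, hx, hx0⟩ := ((hw.eventually_gt_atTop M).and (eventually_gt_atTop 0)).exists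
  exact absurd (hM x hx0) (not_le.2 hx)

theorem exists_tendsto_wFun (hN : 1 ≤ N) {M : ℝ} (hM : ∀ r, 0 < r → wFun N p f' r ≤ M) :
    ∃ l, 0 < l ∧ Tendsto (wFun N p f') atTop (𝓝 l) := by
  set W := fun x => wFun N p f' (max x 1)
  have hmono : Monotone W := fun x y hxy =>
    hf.wFun_le hg hN (lt_max_of_lt_right one_pos) (max_le_max hxy le_rfl)
  have hbdd : BddAbove (range W) := ⟨M, by
    rintro _ ⟨x, rfl⟩
    exact hM _ (lt_max_of_lt_right one_pos)⟩
  refine ⟨⨆ x, W x, (wFun_pos (N := N) one_pos (hg 1 one_pos)).trans_le ?_,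
    (tendsto_atTop_ciSup hmono hbdd).congr' ?_⟩
  · simpa [W] using le_ciSup hbdd 1
  · filter_upwards [eventually_ge_atTop 1] with x hx
    simp [W, max_eq_left hx]

/-- L'Hôpital's rule for `f / ρ^{-q}`, `q = 1/(p-1)`: the quotient of derivatives is
`(p-1) w^q ρ / ρ'`, since `-f' = g^q`. -/
theorem tendsto_rho_rpow_mul (hN : 1 ≤ N) (hp : 1 < p) {l : ℝ} (hl : 0 < l)
    (hw : Tendsto (wFun N p f') atTop (𝓝 l)) (hf0 : Tendsto f atTop (𝓝 0)) :
    Tendsto (fun r => rho N r ^ (1 / (p - 1)) * f r) atTop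
      (𝓝 ((p - 1) * l ^ (1 / (p - 1)))) := by
  set q := 1 / (p - 1) with hq_def
  have hq : 0 < q := by rw [hq_def]; exact one_div_pos.2 (by linarith)
  have hc : Tendsto (fun r : ℝ => (1 + ((N : ℝ) - 1) / r)⁻¹) atTop (𝓝 1) := by
    simpa using (((tendsto_const_nhds (x := (N : ℝ) - 1)).div_atTop tendsto_id).const_add 1).inv₀
      (by norm_num)
  have hquot : Tendsto (fun r => f' r / (rho' N r * (-q) * rho N r ^ (-q - 1))) atTop
      (𝓝 ((p - 1) * l ^ q)) := by
    refine (((hw.rpow_const (Or.inl hl.ne')).const_mul (p - 1)).mul hc).congr' ?_ |>.trans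
      (by rw [mul_one])
    filter_upwards [eventually_gt_atTop 0] with r hr
    have hρ := rho_pos (N := N) hr
    have hgr := hg r hr
    have := one_le_one_add_div hN hr
    rw [rho'_eq hN hr, show f' r = -gFun p f' r ^ q by
        rw [← neg_eq_gFun_rpow (by linarith) hgr]; ring,
      wFun, mul_rpow hρ.le hgr.le, show -q - 1 = -(q + 1) by ring, rpow_neg hρ.le,
      rpow_add hρ, rpow_one, show p - 1 = q⁻¹ by rw [hq_def, one_div, inv_inv]]
    have := rpow_pos_of_pos hgr q
    have := rpow_pos_of_pos hρ q
    field_simp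
  refine (HasDerivAt.lhopital_zero_atTop (eventually_atTop.2 ⟨1, fun r hr =>
      hf.hasDerivAt (by linarith)⟩)
    (eventually_atTop.2 ⟨1, fun r hr =>
      (hasDerivAt_rho hN r).rpow_const (Or.inl (rho_pos (by linarith)).ne')⟩)
    (eventually_atTop.2 ⟨1, fun r hr => ?_⟩) hf0
    ((tendsto_rpow_neg_atTop hq).comp tendsto_rho_atTop) hquot).congr' ?_
  · exact mul_ne_zero (mul_ne_zero (rho'_pos hN (by linarith)).ne' (neg_ne_zero.2 hq.ne'))
      (rpow_pos_of_pos (rho_pos (by linarith)) _).ne'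
  · filter_upwards [eventually_gt_atTop 0] with r hr
    rw [rpow_neg (rho_pos hr).le, div_inv_eq_mul, mul_comm]

theorem exists_tendsto_of_wFun_le (hN : 1 ≤ N) (hp : 1 < p) {M : ℝ}
    (hM : ∀ r, 0 < r → wFun N p f' r ≤ M) :
    ∃ l, 0 < l ∧ Tendsto (wFun N p f') atTop (𝓝 l) ∧
      Tendsto (fun r => rho N r ^ (1 / (p - 1)) * f r) atTop (𝓝 ((p - 1) * l ^ (1 / (p - 1)))) := by
  obtain ⟨l, hl, hw⟩ := hf.exists_tendsto_wFun hg hN hM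
  exact ⟨l, hl, hw, hf.tendsto_rho_rpow_mul hg hN hp hl hw (hf.tendsto_zero_of_wFun_le hg hN hM)⟩

theorem rho_rpow_mul_wDeriv (hN : 1 ≤ N) (hp : p ≠ 1) (hr : 0 < r) :
    rho N r ^ ((2 - p) / (p - 1)) * wDeriv N p f' F' r = rho N r ^ (1 / (p - 1)) * f r := by
  have hexp : (2 - p) / (p - 1) + 1 = 1 / (p - 1) := by
    rw [div_add_one (sub_ne_zero.2 hp), show 2 - p + (p - 1) = 1 by ring]
  rw [hf.wDeriv_eq hN hr (hg r hr), ← mul_assoc, ← rpow_add_one (rho_pos hr).ne', hexp]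

theorem tendsto_wDeriv_div_wFun (hN : 1 ≤ N) (hp1 : 1 < p) (hp2 : p < 2) {l L : ℝ} (hl : 0 < l)
    (hw : Tendsto (wFun N p f') atTop (𝓝 l))
    (hρf : Tendsto (fun r => rho N r ^ (1 / (p - 1)) * f r) atTop (𝓝 L)) :
    Tendsto (fun r => wDeriv N p f' F' r / wFun N p f' r) atTop (𝓝 0) := by
  set q := 1 / (p - 1)
  have hq : 1 < q := by rw [lt_one_div (by norm_num) (by linarith)]; linarith
  have hρ : Tendsto (fun r => rho N r ^ (1 - q)) atTop (𝓝 0) := by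
    simpa [Function.comp_def] using
      (tendsto_rpow_neg_atTop (by linarith : 0 < q - 1)).comp (tendsto_rho_atTop (N := N))
  have hprod := (hρ.mul hρf).mul (hw.inv₀ hl.ne')
  rw [zero_mul, zero_mul] at hprod
  refine hprod.congr' ?_
  filter_upwards [eventually_gt_atTop 0] with r hr
  rw [hf.wDeriv_eq hN hr (hg r hr), ← mul_assoc, ← rpow_add (rho_pos hr), sub_add_cancel,
    rpow_one, div_eq_mul_inv]

theorem hasDerivAt_div_gFun (hp : p ≠ 1) (hr : 0 < r) :
    HasDerivAt (fun r => f r / gFun p f' r)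
      ((1 + ((N : ℝ) - 1) / r) * (f r / gFun p f' r) - (f r / gFun p f' r) ^ 2
        - gFun p f' r ^ ((2 - p) / (p - 1))) r := by
  have hgr := hg r hr
  have hf' : f' r = -(gFun p f' r ^ ((2 - p) / (p - 1)) * gFun p f' r) := by
    rw [← rpow_add_one hgr.ne', show (2 - p) / (p - 1) + 1 = 1 / (p - 1) by
      field_simp [sub_ne_zero.2 hp]; ring, ← neg_eq_gFun_rpow hp hgr, neg_neg]
  refine ((hf.hasDerivAt hr).div (hf.hasDerivAt_gFun hr) hgr.ne').congr_deriv ?_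
  rw [hf', hf.F'_eq hr hgr]
  field_simp
  ring

theorem hasDerivAt_gFun_rpow (s : ℝ) (hr : 0 < r) :
    HasDerivAt (fun r => gFun p f' r ^ s)
      (s * gFun p f' r ^ s * (f r / gFun p f' r - (1 + ((N : ℝ) - 1) / r))) r := by
  have hgr := hg r hr
  refine ((hf.hasDerivAt_gFun hr).rpow_const (Or.inl hgr.ne')).congr_deriv ?_
  rw [hf.F'_eq hr hgr, rpow_sub_one hgr.ne']
  field_simp
  ring

/-- `φ = f/g - 4 g^{(2-p)/(p-1)}` satisfies `φ' ≥ φ/2` once `f/g < 1/4`, so a positive value of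
`φ` would grow exponentially, while `φ < f/g < 1/4`. -/
theorem div_gFun_le (hN : 1 ≤ N) (hp1 : 1 < p) (hp2 : p < 2) {R : ℝ} (hR : 0 < R)
    (hsmall : ∀ x ≥ R, f x / gFun p f' x < 1 / 4) {x : ℝ} (hx : R ≤ x) :
    f x / gFun p f' x ≤ 4 * gFun p f' x ^ ((2 - p) / (p - 1)) := by
  set s := (2 - p) / (p - 1)
  have hs : 0 < s := div_pos (by linarith) (by linarith)
  set φ := fun y => f y / gFun p f' y - 4 * gFun p f' y ^ s
  by_contra! hφx
  have hgrowth : ∀ y ≥ x, φ x * exp (1 / 2 * (y - x)) ≤ φ y := fun y hy =>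
    mul_exp_le_of_mul_le_hasDerivAt (fun z hz => (hf.hasDerivAt_div_gFun hg (by linarith)
      (hR.trans_le (hx.trans hz))).sub ((hf.hasDerivAt_gFun_rpow hg s
      (hR.trans_le (hx.trans hz))).const_mul 4)) (fun z hz => by
        have hz0 : 0 < z := hR.trans_le (hx.trans hz)
        have hc := one_le_one_add_div hN hz0
        have hu0 : 0 < f z / gFun p f' z := div_pos (hf.pos hg hN hz0) (hg z hz0)
        have hv0 : 0 < gFun p f' z ^ s := rpow_pos_of_pos (hg z hz0) s
        have hu := hsmall z (hx.trans hz)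
        simp only [φ]
        nlinarith [mul_pos hu0 (by linarith : (0 : ℝ) < 1 / 4 - f z / gFun p f' z),
          mul_pos (mul_pos hs hv0) (by linarith : (0 : ℝ) < 1 + (N - 1) / z - f z / gFun p f' z),
          mul_nonneg hu0.le (by linarith : (0 : ℝ) ≤ 1 + (N - 1) / z - 1)]) hy
  have hunbdd : Tendsto (fun y => φ x * exp (1 / 2 * (y - x))) atTop atTop :=
    (tendsto_exp_atTop.comp ((tendsto_atTop_add_const_right _ _ tendsto_id).const_mul_atTop
      (by norm_num))).const_mul_atTop (by linarith)
  obtain ⟨y, hy, hyx⟩ := ((hunbdd.eventually_gt_atTop (1 / 4)).and (eventually_ge_atTop x)).exists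
  have := rpow_pos_of_pos (hg y (hR.trans_le (hx.trans hyx))) s
  linarith [hgrowth y hyx, hsmall y (hx.trans hyx)]

theorem gFun_rpow_le (hN : 1 ≤ N) (hp1 : 1 < p) (hp2 : p < 2) {R : ℝ} (hR : 0 < R)
    (hsmall : ∀ x ≥ R, f x / gFun p f' x < 1 / 4) {x : ℝ} (hx : R ≤ x) :
    gFun p f' x ^ ((2 - p) / (p - 1)) ≤
      gFun p f' R ^ ((2 - p) / (p - 1)) * exp (-((2 - p) / (p - 1) / 2) * (x - R)) := by
  set s := (2 - p) / (p - 1)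
  have hs : 0 < s := div_pos (by linarith) (by linarith)
  refine le_mul_exp_of_hasDerivAt_le_mul (fun y hy => hf.hasDerivAt_gFun_rpow hg s
    (hR.trans_le hy)) (fun y hy => ?_) hx
  have hy0 : 0 < y := hR.trans_le hy
  have hc := one_le_one_add_div hN hy0
  have hv0 : 0 < gFun p f' y ^ s := rpow_pos_of_pos (hg y hy0) s
  nlinarith [mul_pos hs hv0, hsmall y hy]

/-- `(log w)' = f/g ≤ 4 g^{(2-p)/(p-1)}`, and the right side decays exponentially. -/
theorem log_wFun_le (hN : 1 ≤ N) (hp1 : 1 < p) (hp2 : p < 2) {R : ℝ} (hR : 0 < R)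
    (hsmall : ∀ x ≥ R, f x / gFun p f' x < 1 / 4) {x : ℝ} (hx : R ≤ x) :
    log (wFun N p f' x) ≤
      log (wFun N p f' R) + 8 * gFun p f' R ^ ((2 - p) / (p - 1)) / ((2 - p) / (p - 1)) := by
  set s := (2 - p) / (p - 1)
  have hs : 0 < s := div_pos (by linarith) (by linarith)
  set K := 8 * gFun p f' R ^ s / s
  have hK : 0 ≤ K := div_nonneg (mul_nonneg (by norm_num) (rpow_nonneg (hg R hR).le _)) hs.le
  have hlin : ∀ y, HasDerivAt (fun y => -(s / 2) * (y - R)) (-(s / 2)) y := fun y => by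
    simpa using ((hasDerivAt_id y).sub_const R).const_mul (-(s / 2))
  have hlog : log (wFun N p f' x) ≤ log (wFun N p f' R) + K * (1 - exp (-(s / 2) * (x - R))) := by
    refine image_le_of_hasDerivAt_le_Ici (f := fun y => log (wFun N p f' y))
      (f' := fun y => f y / gFun p f' y)
      (B := fun y => log (wFun N p f' R) + K * (1 - exp (-(s / 2) * (y - R))))
      (B' := fun y => 4 * gFun p f' R ^ s * exp (-(s / 2) * (y - R)))
      (fun y hy => ?_) (fun y _ => ?_) (by simp) (fun y hy => ?_) hx
    · have hy0 := hR.trans_le hy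
      refine ((hf.hasDerivAt_wFun hN hy0).log (wFun_pos hy0 (hg y hy0)).ne').congr_deriv ?_
      rw [hf.wDeriv_eq hN hy0 (hg y hy0), wFun, mul_div_mul_left _ _ (rho_pos hy0).ne']
    · refine (((hasDerivAt_const y 1).sub (hlin y).exp).const_mul K |>.const_add _).congr_deriv ?_
      simp only [K]
      field_simp
      ring
    · exact (hf.div_gFun_le hg hN hp1 hp2 hR hsmall hy).trans
        (by rw [mul_assoc]; gcongr; exact hf.gFun_rpow_le hg hN hp1 hp2 hR hsmall hy)
  nlinarith [exp_pos (-(s / 2) * (x - R))]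

theorem exists_wFun_le_of_tendsto (hN : 1 ≤ N) (hp1 : 1 < p) (hp2 : p < 2)
    (hlim : Tendsto (fun r => wDeriv N p f' F' r / wFun N p f' r) atTop (𝓝 0)) :
    ∃ M, ∀ r, 0 < r → wFun N p f' r ≤ M := by
  have hu : Tendsto (fun r => f r / gFun p f' r) atTop (𝓝 0) := by
    refine hlim.congr' ?_
    filter_upwards [eventually_gt_atTop 0] with r hr
    rw [hf.wDeriv_eq hN hr (hg r hr), wFun, mul_div_mul_left _ _ (rho_pos hr).ne']
  obtain ⟨R, hR⟩ := eventually_atTop.1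
    ((hu.eventually_lt_const (by norm_num : (0 : ℝ) < 1 / 4)).and (eventually_gt_atTop 0))
  have hR0 : 0 < R := (hR R le_rfl).2
  have hsmall : ∀ x ≥ R, f x / gFun p f' x < 1 / 4 := fun x hx => (hR x hx).1
  set K := 8 * gFun p f' R ^ ((2 - p) / (p - 1)) / ((2 - p) / (p - 1))
  have hK : 0 ≤ K := div_nonneg (mul_nonneg (by norm_num) (rpow_nonneg (hg R hR0).le _))
    (div_pos (by linarith) (by linarith)).le
  have hwR := wFun_pos (N := N) hR0 (hg R hR0)
  refine ⟨wFun N p f' R * exp K, fun x hx => ?_⟩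
  rcases le_total x R with hxR | hRx
  · exact (hf.wFun_le hg hN hx hxR).trans (le_mul_of_one_le_right hwR.le (one_le_exp hK))
  · calc wFun N p f' x = exp (log (wFun N p f' x)) := (exp_log (wFun_pos hx (hg x hx))).symm
      _ ≤ exp (log (wFun N p f' R) + K) :=
        exp_le_exp.2 (hf.log_wFun_le hg hN hp1 hp2 hR0 hsmall hRx)
      _ = wFun N p f' R * exp K := by rw [exp_add, exp_log hwR]

end IsProfileSol

theorem stmt11_general (N : ℕ) (hN : 2 ≤ N) (p : ℝ)
    (hp1 : 2 * (N : ℝ) / ((N : ℝ) + 1) < p) (hp2 : p < 2)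
    (a : ℝ)
    (f f' F' : ℝ → ℝ) (hf : IsProfileSol N p a f f' F')
    (hg : ∀ r, 0 < r → 0 < gFun p f' r) :
    ((∃ M : ℝ, ∀ r, 0 < r → |wFun N p f' r| ≤ M) ↔
      Filter.Tendsto (fun r => wDeriv N p f' F' r / wFun N p f' r) Filter.atTop (nhds 0)) ∧
    ((∃ M : ℝ, ∀ r, 0 < r → |wFun N p f' r| ≤ M) →
      ∃ l : ℝ, 0 < l ∧ Filter.Tendsto (wFun N p f') Filter.atTop (nhds l) ∧
        Filter.Tendsto (fun r => rho N r ^ ((2 - p) / (p - 1)) * wDeriv N p f' F' r)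
          Filter.atTop (nhds ((p - 1) * l ^ (1 / (p - 1))))) := by
  have hN1 : 1 ≤ N := by omega
  have hp : 1 < p := by
    have : (2 : ℝ) ≤ N := by exact_mod_cast hN
    have : (1 : ℝ) < 2 * N / (N + 1) := by rw [lt_div_iff₀ (by positivity)]; linarith
    linarith
  have hbdd (M : ℝ) (hM : ∀ r, 0 < r → |wFun N p f' r| ≤ M) :=
    hf.exists_tendsto_of_wFun_le hg hN1 hp fun r hr => (le_abs_self _).trans (hM r hr)
  refine ⟨⟨fun ⟨M, hM⟩ => ?_, fun hlim => ?_⟩, fun ⟨M, hM⟩ => ?_⟩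
  · obtain ⟨l, hl, hw, hρf⟩ := hbdd M hM
    exact hf.tendsto_wDeriv_div_wFun hg hN1 hp hp2 hl hw hρf
  · obtain ⟨M, hM⟩ := hf.exists_wFun_le_of_tendsto hg hN1 hp hp2 hlim
    exact ⟨M, fun r hr => (abs_of_pos (wFun_pos hr (hg r hr))).trans_le (hM r hr)⟩
  · obtain ⟨l, hl, hw, hρf⟩ := hbdd M hM
    refine ⟨l, hl, hw, hρf.congr' ?_⟩
    filter_upwards [eventually_gt_atTop 0] with r hr
    exact (hf.rho_rpow_mul_wDeriv hg hN1 (by linarith) hr).symm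

/-- if `g(·;a) > 0` on `(0,∞)`, then `w(·;a)` is bounded on `(0,∞)` iff
`w'/w → 0` at infinity; and if bounded, `w(r;a) → l(a) ∈ (0,∞)` and
`ρ(r)^{(2-p)/(p-1)} w'(r;a) → (p-1) l(a)^{1/(p-1)}` as `r → ∞`. -/
theorem stmt11 (N : ℕ) (hN : 2 ≤ N) (p : ℝ)
    (hp1 : 2 * (N : ℝ) / ((N : ℝ) + 1) < p) (hp2 : p < 2)
    (a : ℝ) (ha : 0 < a)
    (f f' F' : ℝ → ℝ) (hf : IsProfileSol N p a f f' F')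
    (hg : ∀ r, 0 < r → 0 < gFun p f' r) :
    ((∃ M : ℝ, ∀ r, 0 < r → |wFun N p f' r| ≤ M) ↔
      Filter.Tendsto (fun r => wDeriv N p f' F' r / wFun N p f' r) Filter.atTop (nhds 0)) ∧
    ((∃ M : ℝ, ∀ r, 0 < r → |wFun N p f' r| ≤ M) →
      ∃ l : ℝ, 0 < l ∧ Filter.Tendsto (wFun N p f') Filter.atTop (nhds l) ∧
        Filter.Tendsto (fun r => rho N r ^ ((2 - p) / (p - 1)) * wDeriv N p f' F' r)
          Filter.atTop (nhds ((p - 1) * l ^ (1 / (p - 1))))) :=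
  stmt11_general N hN p hp1 hp2 a f f' F' hf hg
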